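/- Let f ∈ L²(ℝ), 𝒢f its Gabor transform, and 𝒮f the entire extension of the spectrogram. Define L(p,u) = p + (1/2)·[[1,−i],[i,1]]·u ∈ ℂ² and Q(p,u) = −(π/2)|u|² − πi(2p₁+u₁)u₂ for p,u ∈ ℝ². Then for all p,u ∈ ℝ²: 𝒢f(p+u) · conj(𝒢f(p)) = 𝒮f(L(p,u)) · e^{Q(p,u)}. -/

import Mathlib

open Real MeasureTheory

/-- The Gabor transform (short-time Fourier transform with Gaussian window). -/
noncomputable def gabor (f : ℝ → ℂ) (x ω : ℝ) : ℂ :=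
  ((2 ^ ((1 : ℝ) / 4) : ℝ) : ℂ) *
    ∫ t : ℝ, f t * Complex.exp (-(π : ℂ) * ((t : ℂ) - (x : ℂ)) ^ 2) *
      Complex.exp (-2 * (π : ℂ) * Complex.I * (ω : ℂ) * (t : ℂ))

/-- The Bargmann transform. -/
noncomputable def bargmann (f : ℝ → ℂ) (z : ℂ) : ℂ :=
  ((2 ^ ((1 : ℝ) / 4) : ℝ) : ℂ) *
    ∫ t : ℝ, f t * Complex.exp (2 * (π : ℂ) * (t : ℂ) * z - (π : ℂ) * (t : ℂ) ^ 2
      - (π : ℂ) / 2 * z ^ 2)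

/-- The entire extension of the spectrogram to `ℂ²`. -/
noncomputable def spectrogramExt (f : ℝ → ℂ) (z : ℂ × ℂ) : ℂ :=
  bargmann f (z.1 - Complex.I * z.2) *
    (starRingEnd ℂ) (bargmann f ((starRingEnd ℂ) (z.1 + Complex.I * z.2))) *
    Complex.exp (-(π : ℂ) * (z.1 ^ 2 + z.2 ^ 2))

/-- The evaluation point `L(p,u) = p + (1/2)·[[1,−i],[i,1]]·u ∈ ℂ²`. -/
noncomputable def evalPoint (p u : ℝ × ℝ) : ℂ × ℂ :=
  ((p.1 : ℂ) + ((u.1 : ℂ) - Complex.I * (u.2 : ℂ)) / 2,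
   (p.2 : ℂ) + (Complex.I * (u.1 : ℂ) + (u.2 : ℂ)) / 2)

/-- The exponent `Q(p,u) = −(π/2)|u|² − πi(2p₁+u₁)u₂`. -/
noncomputable def evalExponent (p u : ℝ × ℝ) : ℂ :=
  -(π : ℂ) / 2 * ((u.1 : ℂ) ^ 2 + (u.2 : ℂ) ^ 2) -
    (π : ℂ) * Complex.I * (2 * (p.1 : ℂ) + (u.1 : ℂ)) * (u.2 : ℂ)

/-!
The Gabor transform is the Bargmann transform at `x - iω` times the explicit Gaussian phase
`exp (gaborPhase x ω)`. The point `L(p,u)` is chosen so that `z₁ - i z₂` equals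
`(p₁+u₁) - i(p₂+u₂)` and `z₁ + i z₂` equals `p₁ + i p₂`, so both Bargmann factors of
`𝒮f(L(p,u))` match those of the left-hand side, and what remains is an identity
between the exponents of Gaussian phases.
-/

namespace Gabor

open Complex ComplexConjugate

noncomputable def gaborPhase (x ω : ℝ) : ℂ :=
  -(π : ℂ) * I * x * ω - (π : ℂ) / 2 * ((x : ℂ) ^ 2 + (ω : ℂ) ^ 2)

lemma gabor_eq_bargmann_mul_exp (f : ℝ → ℂ) (x ω : ℝ) :
    gabor f x ω = bargmann f (x - I * ω) * exp (gaborPhase x ω) := by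
  unfold gabor bargmann gaborPhase
  conv_rhs => rw [mul_assoc, ← integral_mul_const]
  congr 2 with t
  rw [mul_assoc, ← Complex.exp_add]
  conv_rhs => rw [mul_assoc, ← Complex.exp_add]
  congr 2
  linear_combination ((π : ℂ) * (ω : ℂ) ^ 2 / 2) * I_sq

lemma conj_gaborPhase (x ω : ℝ) :
    conj (gaborPhase x ω) = (π : ℂ) * I * x * ω - (π : ℂ) / 2 * ((x : ℂ) ^ 2 + (ω : ℂ) ^ 2) := by
  simp only [gaborPhase, map_sub, map_neg, map_mul, map_div₀, map_add, map_pow, conj_I,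
    conj_ofReal, map_ofNat]
  ring

lemma evalPoint_fst_sub_I_mul_snd (p u : ℝ × ℝ) :
    (evalPoint p u).1 - I * (evalPoint p u).2 = ↑(p.1 + u.1) - I * ↑(p.2 + u.2) := by
  simp only [evalPoint]
  push_cast
  linear_combination (-(u.1 : ℂ) / 2) * I_sq

lemma conj_evalPoint_fst_add_I_mul_snd (p u : ℝ × ℝ) :
    conj ((evalPoint p u).1 + I * (evalPoint p u).2) = p.1 - I * p.2 := by
  have h : (evalPoint p u).1 + I * (evalPoint p u).2 = p.1 + I * p.2 := by
    simp only [evalPoint]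
    linear_combination ((u.1 : ℂ) / 2) * I_sq
  rw [h, map_add, map_mul, conj_I, conj_ofReal, conj_ofReal]
  ring

lemma gaborPhase_add_conj_gaborPhase (p u : ℝ × ℝ) :
    gaborPhase (p.1 + u.1) (p.2 + u.2) + conj (gaborPhase p.1 p.2) =
      -(π : ℂ) * ((evalPoint p u).1 ^ 2 + (evalPoint p u).2 ^ 2) + evalExponent p u := by
  rw [conj_gaborPhase]
  simp only [gaborPhase, evalPoint, evalExponent]
  push_cast
  linear_combination ((π : ℂ) * ((u.1 : ℂ) ^ 2 + (u.2 : ℂ) ^ 2) / 4) * I_sq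

end Gabor

open Gabor Complex in
theorem gabor_tensor_eq_eval_spectrogramExt_general (f : ℝ → ℂ)
    (p u : ℝ × ℝ) :
    gabor f (p.1 + u.1) (p.2 + u.2) * (starRingEnd ℂ) (gabor f p.1 p.2) =
      spectrogramExt f (evalPoint p u) * Complex.exp (evalExponent p u) := by
  rw [gabor_eq_bargmann_mul_exp, gabor_eq_bargmann_mul_exp, spectrogramExt,
    evalPoint_fst_sub_I_mul_snd, conj_evalPoint_fst_add_I_mul_snd, map_mul, ← exp_conj,
    mul_mul_mul_comm, ← Complex.exp_add, gaborPhase_add_conj_gaborPhase, Complex.exp_add]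
  ring

/-- For all `p, u ∈ ℝ²`:
`𝒢f(p+u) · conj(𝒢f(p)) = 𝒮f(L(p,u)) · e^{Q(p,u)}`, where `𝒮f` is the entire
extension of the spectrogram. -/
theorem gabor_tensor_eq_eval_spectrogramExt (f : ℝ → ℂ) (hf : MemLp f 2 volume)
    (p u : ℝ × ℝ) :
    gabor f (p.1 + u.1) (p.2 + u.2) * (starRingEnd ℂ) (gabor f p.1 p.2) =
      spectrogramExt f (evalPoint p u) * Complex.exp (evalExponent p u) :=
  gabor_tensor_eq_eval_spectrogramExt_general f p u
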